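/- arXiv:1111.0094 — 4 statements merged into one kernel-verified Lean document; each statement's English description precedes it below -/
import Mathlib

section
/- For every positive integer n, the total number of 1's occurring among all partitions of n equals the sum of P(i) for i = 0 to n-1; i.e., Q_1(n) = P(0) + P(1) + ... + P(n-1). -/
/-- Number of partitions of `n`. -/
def P (n : ℕ) : ℕ := Fintype.card (Nat.Partition n)

/-- Partition function extended to `ℤ`, zero for negative arguments. -/
def PZ (z : ℤ) : ℕ := if z < 0 then 0 else P z.toNat

/-- Total number of occurrences of the part `k` over all partitions of `n`. -/
def Q (k n : ℕ) : ℕ := ∑ p : Nat.Partition n, Multiset.count k p.parts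

/-- `Q` extended to `ℤ`, zero for non-positive arguments. -/
def QZ (k : ℕ) (z : ℤ) : ℕ := if z ≤ 0 then 0 else Q k z.toNat

/-- Sum over all partitions of `n` of the number of distinct part-sizes. -/
def S (n : ℕ) : ℕ := ∑ p : Nat.Partition n, p.parts.toFinset.card

/-- Number of pairs `(λ, m)` with `λ` a partition of `n` and `m` a part-size
occurring at least `k` times in `λ`. -/
def V (k n : ℕ) : ℕ :=
  ∑ p : Nat.Partition n, (p.parts.toFinset.filter (fun m => k ≤ p.parts.count m)).card

/-! Removing one part `k` is a bijection from the partitions of `n` containing `k` onto the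
partitions of `n - k`, and it lowers the number of parts `k` by one. Hence
`Q k n = Q k (n - k) + P (n - k)`; for `k = 1` this telescopes to the sum. -/

open Nat.Partition in
theorem Q_eq_Q_sub_add_P {k n : ℕ} (hk : 1 ≤ k) (hkn : k ≤ n) :
    Q k n = Q k (n - k) + P (n - k) := by
  have hQ_subtype : Q k n = ∑ p : {p : n.Partition // k ∈ p.parts}, p.1.parts.count k := by
    rw [Q, ← Finset.sum_filter_of_ne fun p _ h => Multiset.count_ne_zero.1 h,
      ← Finset.sum_subtype_eq_sum_filter, Finset.subtype_univ]
  rw [hQ_subtype, ← (partitionWithPartEquiv hk hkn).symm.sum_comp]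
  simp [Finset.sum_add_distrib, Q, P]

theorem stmt_1_general (n : ℕ) :
    Q 1 n = ∑ i ∈ Finset.range n, P i := by
  induction n with
  | zero => simp [Q]
  | succ m ih =>
    simpa [Finset.sum_range_succ, ih] using Q_eq_Q_sub_add_P le_rfl (Nat.le_add_left 1 m)

theorem stmt_1 (n : ℕ) (hn : 0 < n) :
    Q 1 n = ∑ i ∈ Finset.range n, P i :=
  stmt_1_general n
end

section
/- (Stanley's theorem) For every positive integer n, the total number of 1's occurring among all partitions of n equals the sum over all partitions of n of the number of distinct parts of that partition; i.e., Q_1(n) = S(n). -/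
/-!
Removing `j` copies of a part `k` is a bijection from the partitions of `n` with at least `j`
parts equal to `k` onto the partitions of `n - j k`. Double counting the pairs `(λ, j)`
with `1 ≤ j ≤ count k λ` gives `Q k n = ∑_{j ≥ 1} p(n - j k)`, and double counting the pairs
`(λ, m)` with `m` a part of `λ` gives `S n = ∑_{m ≥ 1} p(n - m)`. For `k = 1` the two sums agree.
-/

open Finset

namespace Nat.Partition

variable {n : ℕ}

def subtypeLePartsEquiv (s : Multiset ℕ) (hs : ∀ x ∈ s, 0 < x) (hsum : s.sum ≤ n) :
    {p : n.Partition // s ≤ p.parts} ≃ (n - s.sum).Partition where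
  toFun p :=
    ⟨p.1.parts - s, fun hx => p.1.parts_pos (Multiset.mem_of_le (Multiset.sub_le_self _ _) hx), by
      have := congrArg Multiset.sum (tsub_add_cancel_of_le p.2)
      rw [Multiset.sum_add, p.1.parts_sum] at this
      omega⟩
  invFun q := ⟨⟨q.parts + s, fun hx => (Multiset.mem_add.mp hx).elim q.parts_pos (hs _), by
    rw [Multiset.sum_add, q.parts_sum]; omega⟩, Multiset.le_add_left _ _⟩
  left_inv p := Subtype.ext <| Nat.Partition.ext <| tsub_add_cancel_of_le p.2
  right_inv q := Nat.Partition.ext <| add_tsub_cancel_right _ _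

theorem card_filter_le_count {k j : ℕ} (hk : 0 < k) (hjk : j * k ≤ n) :
    #{p : n.Partition | j ≤ p.parts.count k} = P (n - j * k) := by
  have hrep : ∀ x ∈ Multiset.replicate j k, 0 < x :=
    fun x hx => Multiset.eq_of_mem_replicate hx ▸ hk
  have hsum : (Multiset.replicate j k).sum = j * k := by simp
  rw [← Fintype.card_subtype, ← hsum, P,
    ← Fintype.card_congr (subtypeLePartsEquiv _ hrep (hsum ▸ hjk))]
  exact Fintype.card_congr (Equiv.subtypeEquivRight fun _ => Multiset.le_count_iff_replicate_le)

theorem count_mul_le (p : n.Partition) (k : ℕ) : p.parts.count k * k ≤ n := by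
  obtain ⟨u, hu⟩ := Multiset.le_iff_exists_add.mp
    (Multiset.le_count_iff_replicate_le.mp (le_refl (p.parts.count k)))
  have := congrArg Multiset.sum hu
  rw [p.parts_sum, Multiset.sum_add, Multiset.sum_replicate, smul_eq_mul] at this
  omega

end Nat.Partition

open Nat.Partition

theorem Q_eq_sum_P {k : ℕ} (hk : 0 < k) (n : ℕ) :
    Q k n = ∑ j ∈ Icc 1 (n / k), P (n - j * k) := by
  calc Q k n = ∑ p : n.Partition, ∑ _j ∈ Icc 1 (p.parts.count k), 1 := by simp [Q]
    _ = ∑ j ∈ Icc 1 (n / k), ∑ _p ∈ {p : n.Partition | j ≤ p.parts.count k}, 1 := by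
      refine sum_comm' fun p j => ?_
      have := (Nat.le_div_iff_mul_le hk).mpr (count_mul_le p k)
      simp only [mem_univ, mem_Icc, mem_filter, true_and]
      omega
    _ = ∑ j ∈ Icc 1 (n / k), P (n - j * k) := by
      refine sum_congr rfl fun j hj => ?_
      rw [← card_eq_sum_ones, card_filter_le_count hk]
      exact (Nat.le_div_iff_mul_le hk).mp (mem_Icc.mp hj).2

theorem S_eq_sum_P (n : ℕ) : S n = ∑ m ∈ Icc 1 n, P (n - m) := by
  calc S n = ∑ p : n.Partition, ∑ _m ∈ p.parts.toFinset, 1 := by simp [S]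
    _ = ∑ m ∈ Icc 1 n, ∑ _p ∈ {p : n.Partition | 1 ≤ p.parts.count m}, 1 := by
      refine sum_comm' fun p m => ?_
      simp only [mem_univ, mem_Icc, mem_filter, true_and, Multiset.mem_toFinset,
        Multiset.one_le_count_iff_mem]
      exact ⟨fun h => ⟨h, p.parts_pos h, le_of_mem_parts h⟩, fun h => h.1⟩
    _ = ∑ m ∈ Icc 1 n, P (n - m) := by
      refine sum_congr rfl fun m hm => ?_
      obtain ⟨hm_pos, hm_le⟩ := mem_Icc.mp hm
      rw [← card_eq_sum_ones, card_filter_le_count hm_pos (by rwa [one_mul]), one_mul]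

theorem stmt_3_general (n : ℕ) : Q 1 n = S n := by
  rw [Q_eq_sum_P one_pos, S_eq_sum_P, Nat.div_one]
  simp only [mul_one]

theorem stmt_3 (n : ℕ) (hn : 0 < n) : Q 1 n = S n :=
  stmt_3_general n
end

section
/- (Generalized Stanley theorem) For every positive integer n and every positive integer k, S(n) = Q_k(n) + Q_k(n+1) + ... + Q_k(n+k-1), i.e., the sum over all partitions of n of the number of distinct parts equals the sum of Q_k(n+i) for i = 0 to k-1. -/
/-!
Removing one part `m` is a bijection from the partitions of `N` having `m` as a part onto the
partitions of `N - m`. Summing over `m` gives `S n = P 0 + ⋯ + P (n - 1)`; following the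
occurrences of `k` through the bijection gives `Q k (n + k) = P n + Q k n`. Hence
`n ↦ ∑_{i<k} Q k (n + i)` grows by `P n` at each step, and it vanishes at `n = 0` because no
partition of a number below `k` has a part `k`.
-/

open Finset

lemma card_filter_mem_parts {n a : ℕ} (ha1 : 1 ≤ a) (ha : a ≤ n) :
    #{p : n.Partition | a ∈ p.parts} = P (n - a) := by
  rw [← Fintype.card_subtype, Fintype.card_congr (Nat.Partition.partitionWithPartEquiv ha1 ha)]
  rfl

lemma Q_eq_zero_of_lt {k n : ℕ} (h : n < k) : Q k n = 0 :=
  sum_eq_zero fun _ _ => Multiset.count_eq_zero.2 fun hk =>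
    (Nat.Partition.le_of_mem_parts hk).not_gt h

lemma Q_eq_P_sub_add_Q_sub {k n : ℕ} (hk : 0 < k) (h : k ≤ n) :
    Q k n = P (n - k) + Q k (n - k) := by
  calc Q k n = ∑ p : n.Partition with k ∈ p.parts, p.parts.count k :=
        (sum_filter_of_ne fun _ _ hp => Multiset.count_ne_zero.1 hp).symm
    _ = ∑ p : {p : n.Partition // k ∈ p.parts}, p.1.parts.count k := sum_subtype _ (by simp) _
    _ = ∑ q : (n - k).Partition, (k ::ₘ q.parts).count k :=
        ((Nat.Partition.partitionWithPartEquiv hk h).symm.sum_comp _).symm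
    _ = P (n - k) + Q k (n - k) := by
        simp [Multiset.count_cons_self, sum_add_distrib, P, Q, add_comm]

lemma Q_add_self {k : ℕ} (hk : 0 < k) (n : ℕ) : Q k (n + k) = P n + Q k n := by
  simpa using Q_eq_P_sub_add_Q_sub hk (Nat.le_add_left k n)

lemma S_eq_sum_range_P (n : ℕ) : S n = ∑ j ∈ range n, P j := by
  have distinct_parts (p : n.Partition) : p.parts.toFinset = {m ∈ Ico 1 (n + 1) | m ∈ p.parts} := by
    ext m
    simp only [Multiset.mem_toFinset, mem_filter, mem_Ico]
    exact ⟨fun h => ⟨⟨p.parts_pos h, Nat.lt_succ_of_le (Nat.Partition.le_of_mem_parts h)⟩, h⟩,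
      And.right⟩
  calc S n = ∑ m ∈ Ico 1 (n + 1), #{p : n.Partition | m ∈ p.parts} := by
        simp only [S, distinct_parts, card_filter]
        exact sum_comm
    _ = ∑ m ∈ Ico 1 (n + 1), P (n - m) := by
        refine sum_congr rfl fun m hm => ?_
        rw [mem_Ico] at hm
        exact card_filter_mem_parts hm.1 (Nat.le_of_lt_succ hm.2)
    _ = ∑ j ∈ range n, P j := by
        rw [sum_Ico_reflect _ _ le_rfl, range_eq_Ico]
        simp

lemma sum_range_add_eq_of_add_eq {M : Type*} [AddCancelCommMonoid M] {f g : ℕ → M} {k : ℕ}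
    (h : ∀ n, f (n + k) = g n + f n) (n : ℕ) :
    ∑ i ∈ range k, f (n + i) = ∑ j ∈ range n, g j + ∑ i ∈ range k, f i := by
  induction n with
  | zero => simp
  | succ n ih =>
    apply add_right_cancel (b := f n)
    calc ∑ i ∈ range k, f (n + 1 + i) + f n = ∑ i ∈ range (k + 1), f (n + i) := by
          rw [sum_range_succ']
          simp only [add_assoc, add_comm 1, add_zero]
      _ = ∑ i ∈ range k, f (n + i) + (g n + f n) := by rw [sum_range_succ, h]
      _ = ∑ j ∈ range (n + 1), g j + ∑ i ∈ range k, f i + f n := by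
          rw [ih, sum_range_succ]
          abel

theorem stmt_5_general (n k : ℕ) (hk : 0 < k) :
    S n = ∑ i ∈ Finset.range k, Q k (n + i) := by
  rw [S_eq_sum_range_P, sum_range_add_eq_of_add_eq (Q_add_self hk) n,
    sum_eq_zero fun i hi => Q_eq_zero_of_lt (mem_range.1 hi), add_zero]

theorem stmt_5 (n k : ℕ) (hn : 0 < n) (hk : 0 < k) :
    S n = ∑ i ∈ Finset.range k, Q k (n + i) :=
  stmt_5_general n k hk
end

section
/- For all positive integers n and k, the number of partitions of n+k that contain the part k at least once, plus the number of pairs (λ, m) with λ a partition of n and m a part occurring at least k times in λ, equals Q_k(n+k); equivalently P(n) + V_k(n) = Q_k(n+k). -/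
/-!
Removing one part `k` is a bijection from the partitions of `n + k` containing `k` onto the
partitions of `n`, and it lowers the multiplicity of `k` by one; hence `Q k (n + k) = P n + Q k n`.
It remains to see `Q k n = V k n` (Elder's theorem). Both sides count pairs (partition, size):
`Q k n` counts the `(λ, j)` with `λ` containing `j` copies of `k`, and `V k n` the `(λ, m)` with
`λ` containing `k` copies of `m`. For fixed `j = m`, replacing the `j` copies of `k` by `k` copies
of `j` is a bijection between the two sets of partitions.
-/

open Finset
open Multiset (replicate le_count_iff_replicate_le)

namespace Nat.Partition

variable {n : ℕ}

theorem mul_le_of_replicate_le {p : n.Partition} {j a : ℕ} (h : replicate j a ≤ p.parts) :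
    j * a ≤ n := by
  obtain ⟨t, ht⟩ := exists_add_of_le h
  have hsum := p.parts_sum
  rw [ht, Multiset.sum_add, Multiset.sum_replicate, smul_eq_mul] at hsum
  omega

theorem count_le {p : n.Partition} {a : ℕ} (ha : 0 < a) : p.parts.count a ≤ n :=
  (Nat.le_mul_of_pos_right _ ha).trans
    (mul_le_of_replicate_le (le_count_iff_replicate_le.1 le_rfl))

def exchange {a b : ℕ} (hb : 0 < b) (p : {p : n.Partition // replicate b a ≤ p.parts}) :
    {p : n.Partition // replicate a b ≤ p.parts} where
  val :=
    { parts := replicate a b + (p.1.parts - replicate b a)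
      parts_pos := by
        intro i hi
        rcases Multiset.mem_add.1 hi with hi | hi
        · rwa [Multiset.eq_of_mem_replicate hi]
        · exact p.1.parts_pos (Multiset.mem_of_le tsub_le_self hi)
      parts_sum := by
        have hsum := congrArg Multiset.sum (tsub_add_cancel_of_le p.2)
        rw [Multiset.sum_add, Multiset.sum_replicate, p.1.parts_sum, smul_eq_mul] at hsum
        rw [Multiset.sum_add, Multiset.sum_replicate, smul_eq_mul, Nat.mul_comm]
        omega }
  property := Multiset.le_add_right _ _

theorem exchange_exchange {a b : ℕ} (ha : 0 < a) (hb : 0 < b)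
    (p : {p : n.Partition // replicate b a ≤ p.parts}) : exchange ha (exchange hb p) = p :=
  Subtype.ext <| Nat.Partition.ext <| by
    simp only [exchange, add_tsub_cancel_left]
    exact add_tsub_cancel_of_le p.2

def exchangeEquiv {a b : ℕ} (ha : 0 < a) (hb : 0 < b) :
    {p : n.Partition // replicate b a ≤ p.parts} ≃
      {p : n.Partition // replicate a b ≤ p.parts} where
  toFun := exchange hb
  invFun := exchange ha
  left_inv := exchange_exchange ha hb
  right_inv := exchange_exchange hb ha

theorem card_replicate_le_comm {a b : ℕ} (ha : 0 < a) (hb : 0 < b) :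
    #{p : n.Partition | replicate b a ≤ p.parts} =
      #{p : n.Partition | replicate a b ≤ p.parts} := by
  simp only [← Fintype.card_subtype]
  exact Fintype.card_congr (exchangeEquiv ha hb)

theorem count_eq_card_filter_replicate_le {k : ℕ} (hk : 0 < k) (p : n.Partition) :
    p.parts.count k = #{j ∈ Icc 1 n | replicate j k ≤ p.parts} := by
  have hIcc : {j ∈ Icc 1 n | replicate j k ≤ p.parts} = Icc 1 (p.parts.count k) := by
    ext j
    simp only [mem_filter, mem_Icc, ← le_count_iff_replicate_le]
    have := p.count_le hk
    omega
  simp [hIcc]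

theorem filter_le_count_eq_filter_replicate_le {k : ℕ} (hk : 0 < k) (p : n.Partition) :
    {m ∈ p.parts.toFinset | k ≤ p.parts.count m} =
      {m ∈ Icc 1 n | replicate k m ≤ p.parts} := by
  ext m
  simp only [mem_filter, Multiset.mem_toFinset, mem_Icc, ← le_count_iff_replicate_le]
  constructor
  · rintro ⟨hm, hkm⟩
    exact ⟨⟨p.parts_pos hm, p.le_of_mem_parts hm⟩, hkm⟩
  · rintro ⟨-, hkm⟩
    exact ⟨Multiset.count_pos.1 (hk.trans_le hkm), hkm⟩

end Nat.Partition

open Nat.Partition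

theorem Q_eq_V {k : ℕ} (hk : 0 < k) (n : ℕ) : Q k n = V k n :=
  calc Q k n = ∑ p : n.Partition, #{j ∈ Icc 1 n | replicate j k ≤ p.parts} := by
        simp only [Q, count_eq_card_filter_replicate_le hk]
    _ = ∑ j ∈ Icc 1 n, #{p : n.Partition | replicate j k ≤ p.parts} :=
        sum_card_bipartiteAbove_eq_sum_card_bipartiteBelow _
    _ = ∑ m ∈ Icc 1 n, #{p : n.Partition | replicate k m ≤ p.parts} :=
        sum_congr rfl fun j hj => card_replicate_le_comm hk (mem_Icc.1 hj).1
    _ = ∑ p : n.Partition, #{m ∈ Icc 1 n | replicate k m ≤ p.parts} :=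
        (sum_card_bipartiteAbove_eq_sum_card_bipartiteBelow _).symm
    _ = V k n := by simp only [V, filter_le_count_eq_filter_replicate_le hk]

theorem Q_eq_P_sub_add_Q_sub_s12 {a m : ℕ} (ha : 0 < a) (ham : a ≤ m) :
    Q a m = P (m - a) + Q a (m - a) :=
  calc Q a m = ∑ p : {p : m.Partition // a ∈ p.parts}, p.1.parts.count a := by
        rw [Q, ← sum_filter_of_ne fun p _ h => Multiset.count_ne_zero.1 h]
        exact sum_subtype _ (fun p => by simp) _
    _ = ∑ q : (m - a).Partition, (a ::ₘ q.parts).count a :=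
        Fintype.sum_equiv (partitionWithPartEquiv ha ham) _ _ fun p => by
          rw [partitionWithPartEquiv_apply_parts, Multiset.cons_erase p.2]
    _ = P (m - a) + Q a (m - a) := by
        simp [sum_add_distrib, P, Q, add_comm]

theorem stmt_12_general (n k : ℕ) (hk : 0 < k) :
    P n + V k n = Q k (n + k) := by
  rw [← Q_eq_V hk, Q_eq_P_sub_add_Q_sub_s12 hk (Nat.le_add_left k n), Nat.add_sub_cancel]

theorem stmt_12 (n k : ℕ) (hn : 0 < n) (hk : 0 < k) :
    P n + V k n = Q k (n + k) :=
  stmt_12_general n k hk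
end
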